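/- arXiv:2310.12885 — 3 statements merged into one kernel-verified Lean document; each statement's English description precedes it below -/
import Mathlib

section
/- Suppose each T_i : [0, t_f] → ℝ is C¹, T_i(0) > 0, and for each i, dT_i/dt ≥ c_i(t)(T_⋆(t) − T_i(t)) where c_i is continuous nonnegative and T_⋆(t) = min_k T_k(t). Then T_i(t) ≥ min_k T_k(0) for all t ∈ [0, t_f] and all i. -/
/-!
At a time `x`, every component achieving the minimum `T⋆ x` has `T_k'(x) ≥ c_k(x)(T⋆ x - T_k x) = 0`,
while the other components stay strictly above `T⋆` near `x`. Hence every right slope of the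
continuous function `T⋆` is asymptotically bounded below by `0`, and a fencing argument makes
`T⋆` nondecreasing, so `T_i t ≥ T⋆ t ≥ T⋆ 0`.
-/

open Finset Set Filter Topology

lemma HasDerivWithinAt.eventually_add_mul_sub_lt {φ : ℝ → ℝ} {φ' x r : ℝ}
    (hφ : HasDerivWithinAt φ φ' (Set.Ici x) x) (hr : r < φ') :
    ∀ᶠ z in 𝓝[>] x, φ x + r * (z - x) < φ z := by
  have hslope : ∀ᶠ z in 𝓝[>] x, r < slope φ x z :=
    (hasDerivWithinAt_iff_tendsto_slope' (lt_irrefl x)).1 hφ.Ioi_of_Ici (Ioi_mem_nhds hr)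
  filter_upwards [hslope, self_mem_nhdsWithin] with z hz (hxz : x < z)
  rw [slope_def_field, lt_div_iff₀ (sub_pos.2 hxz)] at hz
  linarith

lemma Finset.eventually_lt_slope_inf' {ι : Type*} {s : Finset ι} (hs : s.Nonempty)
    {g : ι → ℝ → ℝ} {g' : ι → ℝ} {x r : ℝ}
    (hg : ∀ k ∈ s, HasDerivWithinAt (g k) (g' k) (Set.Ici x) x)
    (hr : ∀ k ∈ s, g k x = s.inf' hs (g · x) → r < g' k) :
    ∀ᶠ z in 𝓝[>] x, r < slope (fun y => s.inf' hs (g · y)) x z := by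
  set m := s.inf' hs (g · x)
  have hline : Tendsto (fun z => m + r * (z - x)) (𝓝[>] x) (𝓝 m) :=
    ((by fun_prop : Continuous fun z => m + r * (z - x)).tendsto' x m (by simp)).mono_left
      nhdsWithin_le_nhds
  have hbelow : ∀ᶠ z in 𝓝[>] x, ∀ k ∈ s, m + r * (z - x) < g k z := by
    rw [eventually_all_finset]
    intro k hk
    rcases (inf'_le (g · x) hk : m ≤ g k x).eq_or_lt with hactive | hinactive
    · filter_upwards [(hg k hk).eventually_add_mul_sub_lt (hr k hk hactive.symm)] with z hz
      rwa [← hactive] at hz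
    · exact hline.eventually_lt ((hg k hk).continuousWithinAt.mono Set.Ioi_subset_Ici_self)
        hinactive
  filter_upwards [hbelow, self_mem_nhdsWithin] with z hz (hxz : x < z)
  rw [slope_def_field, lt_div_iff₀ (sub_pos.2 hxz)]
  linarith [(lt_inf'_iff hs).2 hz]

lemma monotoneOn_of_frequently_slope_right_gt {f : ℝ → ℝ} {a b : ℝ}
    (hf : ContinuousOn f (Icc a b))
    (hslope : ∀ x ∈ Ico a b, ∀ r < 0, ∃ᶠ z in 𝓝[>] x, r < slope f x z) :
    MonotoneOn f (Icc a b) := by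
  intro x hx y hy hxy
  have hfence := image_le_of_liminf_slope_right_le_deriv_boundary (f := -f) (a := x) (b := y)
    (B := fun _ => -f x) (B' := fun _ => 0) ((hf.mono (Icc_subset_Icc hx.1 hy.2)).neg) le_rfl
    continuousOn_const (fun _ _ => hasDerivWithinAt_const _ _ _) ?_ ⟨hxy, le_rfl⟩
  · simpa using hfence
  · intro z hz r hr
    refine (hslope z ⟨hx.1.trans hz.1, hz.2.trans_le hy.2⟩ (-r) (neg_lt_zero.2 hr)).mono ?_
    intro w hw
    change -r < slope f z w at hw
    rw [show (-f) = fun t => -f t from rfl, slope_neg]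
    linarith

theorem temperature_lower_bound_general (N : ℕ) [NeZero N] (tf : ℝ)
    (T T' c : Fin N → ℝ → ℝ)
    (hderiv : ∀ i, ∀ t ∈ Icc (0 : ℝ) tf, HasDerivAt (T i) (T' i t) t)
    (Tstar : ℝ → ℝ)
    (hTstar : ∀ t, Tstar t = Finset.univ.inf' Finset.univ_nonempty (fun k => T k t))
    (hineq : ∀ i, ∀ t ∈ Icc (0 : ℝ) tf, c i t * Tstar t ≤ T' i t + c i t * T i t) :
    ∀ i, ∀ t ∈ Icc (0 : ℝ) tf,
      Finset.univ.inf' Finset.univ_nonempty (fun k => T k 0) ≤ T i t := by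
  obtain rfl : Tstar = fun t => univ.inf' univ_nonempty (T · t) := funext hTstar
  have hcont : ContinuousOn (fun t => univ.inf' univ_nonempty (T · t)) (Icc 0 tf) :=
    ContinuousOn.finset_inf'_apply univ_nonempty fun k _ t ht =>
      (hderiv k t ht).continuousAt.continuousWithinAt
  have hmono : MonotoneOn (fun t => univ.inf' univ_nonempty (T · t)) (Icc 0 tf) := by
    refine monotoneOn_of_frequently_slope_right_gt hcont fun x hx r hr => ?_
    have hxI := Ico_subset_Icc_self hx
    refine (univ.eventually_lt_slope_inf' univ_nonempty
      (fun k _ => (hderiv k x hxI).hasDerivWithinAt) fun k _ hactive => ?_).frequently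
    have hactive_ineq := hineq k x hxI
    beta_reduce at hactive_ineq
    rw [← hactive] at hactive_ineq
    linarith
  intro i t ht
  calc univ.inf' univ_nonempty (T · 0) ≤ univ.inf' univ_nonempty (T · t) :=
        hmono ⟨le_rfl, ht.1.trans ht.2⟩ ht ht.1
    _ ≤ T i t := inf'_le _ (mem_univ i)

theorem temperature_lower_bound (N : ℕ) [NeZero N] (tf : ℝ) (htf : 0 < tf)
    (T T' c : Fin N → ℝ → ℝ)
    (hderiv : ∀ i, ∀ t ∈ Icc (0 : ℝ) tf, HasDerivAt (T i) (T' i t) t)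
    (hT'cont : ∀ i, ContinuousOn (T' i) (Icc 0 tf))
    (hccont : ∀ i, ContinuousOn (c i) (Icc 0 tf))
    (hcpos : ∀ i, ∀ t ∈ Icc (0 : ℝ) tf, 0 ≤ c i t)
    (hT0 : ∀ i, 0 < T i 0)
    (Tstar : ℝ → ℝ)
    (hTstar : ∀ t, Tstar t = Finset.univ.inf' Finset.univ_nonempty (fun k => T k t))
    (hineq : ∀ i, ∀ t ∈ Icc (0 : ℝ) tf, c i t * Tstar t ≤ T' i t + c i t * T i t) :
    ∀ i, ∀ t ∈ Icc (0 : ℝ) tf,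
      Finset.univ.inf' Finset.univ_nonempty (fun k => T k 0) ≤ T i t :=
  temperature_lower_bound_general N tf T T' c hderiv Tstar hTstar hineq
end

section
/- Suppose each u_i : [0, t_f] → ℝ is C¹ and satisfies u_i'(t) = Σ_j λ_{ij}(t)(ū_{ij}(t) − u_i(t)) where λ_{ij}(t) ≥ 0 is continuous and ū_{ij}(t) is a convex combination of u_i(t) and u_j(t). Then min_j u_j(0) ≤ u_i(t) ≤ max_j u_j(0) for all t ∈ [0,t_f] and all i. -/
/-!
Since `αᵢⱼ + αⱼᵢ = 1`, the system reads `uᵢ' = ∑ⱼ λᵢⱼ αⱼᵢ (uⱼ - uᵢ)` with nonnegative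
coefficients, so at any time an index `i` at which `uᵢ` is maximal has `uᵢ' ≤ 0`. Hence the
right Dini derivative of `maxₖ uₖ` is nonpositive, and by the fencing theorem for continuous
functions the maximum never exceeds its initial value. Applying this to `-u` bounds the minimum
from below.
-/

open Finset Set Filter Topology

variable {ι : Type*} [Fintype ι] [Nonempty ι]

theorem eventually_slope_sup'_lt {u : ι → ℝ → ℝ} {u' : ι → ℝ} {x r : ℝ}
    (hu : ∀ i, HasDerivWithinAt (u i) (u' i) (Ici x) x)
    (hmax : ∀ i, (∀ j, u j x ≤ u i x) → u' i ≤ 0) (hr : 0 < r) :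
    ∀ᶠ z in 𝓝[>] x, slope (fun t ↦ univ.sup' univ_nonempty (u · t)) x z < r := by
  set m := fun t ↦ univ.sup' univ_nonempty (u · t)
  have hm : ∀ i, u i x ≤ m x := fun i ↦ le_sup' (u · x) (mem_univ i)
  suffices h : ∀ i, ∀ᶠ z in 𝓝[>] x, u i z < m x + r * (z - x) by
    filter_upwards [eventually_all.2 h, self_mem_nhdsWithin] with z hz hxz
    have hmz : m z < m x + r * (z - x) := (sup'_lt_iff _).2 fun i _ ↦ hz i
    rw [slope_def_field, div_lt_iff₀ (sub_pos.2 hxz)]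
    linarith
  intro i
  by_cases hi : ∀ j, u j x ≤ u i x
  · filter_upwards [(hu i).Ioi_of_Ici.limsup_slope_le' (lt_irrefl x)
      ((hmax i hi).trans_lt hr), self_mem_nhdsWithin] with z hz hxz
    rw [slope_def_field, div_lt_iff₀ (sub_pos.2 (mem_Ioi.1 hxz))] at hz
    linarith [hm i]
  · obtain ⟨j, hj⟩ := not_forall.1 hi
    have hlt : u i x < m x := (not_le.1 hj).trans_le (hm j)
    filter_upwards [((hu i).continuousWithinAt.mono Ioi_subset_Ici_self).eventually_lt_const hlt,
      self_mem_nhdsWithin] with z hz hxz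
    linarith [mul_pos hr (sub_pos.2 (mem_Ioi.1 hxz))]

theorem sup'_le_sup'_left_of_deriv_nonpos_at_max {u u' : ι → ℝ → ℝ} {a b : ℝ}
    (hcont : ∀ i, ContinuousOn (u i) (Icc a b))
    (hderiv : ∀ i, ∀ t ∈ Ico a b, HasDerivWithinAt (u i) (u' i t) (Ici t) t)
    (hmax : ∀ t ∈ Ico a b, ∀ i, (∀ j, u j t ≤ u i t) → u' i t ≤ 0) :
    ∀ t ∈ Icc a b, univ.sup' univ_nonempty (u · t) ≤ univ.sup' univ_nonempty (u · a) :=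
  image_le_of_liminf_slope_right_le_deriv_boundary
    (ContinuousOn.finset_sup'_apply univ_nonempty fun i _ ↦ hcont i) le_rfl continuousOn_const
    (fun _ _ ↦ hasDerivWithinAt_const _ _ _)
    fun t ht _ hr ↦ (eventually_slope_sup'_lt (hderiv · t ht) (hmax t ht) hr).frequently

section Cooperative

variable {u u' : ι → ℝ → ℝ} {c : ι → ι → ℝ → ℝ} {a b : ℝ}

theorem le_sup'_of_hasDerivWithinAt_eq_sum_mul_sub
    (hc : ∀ i j, ∀ t ∈ Ico a b, 0 ≤ c i j t)
    (hcont : ∀ i, ContinuousOn (u i) (Icc a b))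
    (hderiv : ∀ i, ∀ t ∈ Ico a b, HasDerivWithinAt (u i) (u' i t) (Ici t) t)
    (hode : ∀ i, ∀ t ∈ Ico a b, u' i t = ∑ j, c i j t * (u j t - u i t))
    {i : ι} {t : ℝ} (ht : t ∈ Icc a b) :
    u i t ≤ univ.sup' univ_nonempty (u · a) := by
  refine (le_sup' (u · t) (mem_univ i)).trans
    (sup'_le_sup'_left_of_deriv_nonpos_at_max hcont hderiv (fun s hs k hk ↦ ?_) t ht)
  rw [hode k s hs]
  exact sum_nonpos fun j _ ↦ mul_nonpos_of_nonneg_of_nonpos (hc k j s hs) (sub_nonpos.2 (hk j))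

theorem inf'_le_of_hasDerivWithinAt_eq_sum_mul_sub
    (hc : ∀ i j, ∀ t ∈ Ico a b, 0 ≤ c i j t)
    (hcont : ∀ i, ContinuousOn (u i) (Icc a b))
    (hderiv : ∀ i, ∀ t ∈ Ico a b, HasDerivWithinAt (u i) (u' i t) (Ici t) t)
    (hode : ∀ i, ∀ t ∈ Ico a b, u' i t = ∑ j, c i j t * (u j t - u i t))
    {i : ι} {t : ℝ} (ht : t ∈ Icc a b) :
    univ.inf' univ_nonempty (u · a) ≤ u i t := by
  have hneg := le_sup'_of_hasDerivWithinAt_eq_sum_mul_sub (u := fun i t ↦ -u i t) (i := i)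
    (u' := fun i t ↦ -u' i t) hc (fun i ↦ (hcont i).neg) (fun i t ht ↦ (hderiv i t ht).neg)
    (fun i t ht ↦ by
      simp only [hode i t ht, ← sum_neg_distrib]
      exact sum_congr rfl fun j _ ↦ by ring) ht
  have hinf : univ.sup' univ_nonempty (fun k ↦ -u k a) ≤ -univ.inf' univ_nonempty (u · a) :=
    sup'_le _ _ fun k _ ↦ neg_le_neg (inf'_le _ (mem_univ k))
  linarith

end Cooperative

theorem velocity_envelope_bounds_general (N : ℕ) [NeZero N] (tf : ℝ)
    (u u' : Fin N → ℝ → ℝ)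
    (lam alpha : Fin N → Fin N → ℝ → ℝ)
    (hlampos : ∀ i j, ∀ t ∈ Icc (0 : ℝ) tf, 0 ≤ lam i j t)
    (halpha : ∀ i j, ∀ t ∈ Icc (0 : ℝ) tf, 0 ≤ alpha i j t ∧ alpha i j t ≤ 1)
    (halphasum : ∀ i j, ∀ t ∈ Icc (0 : ℝ) tf, alpha i j t + alpha j i t = 1)
    (hderiv : ∀ i, ∀ t ∈ Icc (0 : ℝ) tf, HasDerivAt (u i) (u' i t) t)
    (hode : ∀ i, ∀ t ∈ Icc (0 : ℝ) tf,
      u' i t = ∑ j, lam i j t * ((alpha i j t * u i t + alpha j i t * u j t) - u i t)) :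
    ∀ i, ∀ t ∈ Icc (0 : ℝ) tf,
      Finset.univ.inf' Finset.univ_nonempty (fun k => u k 0) ≤ u i t ∧
      u i t ≤ Finset.univ.sup' Finset.univ_nonempty (fun k => u k 0) := by
  intro i t ht
  have hc : ∀ i j, ∀ t ∈ Ico (0 : ℝ) tf, 0 ≤ lam i j t * alpha j i t := fun i j t ht ↦
    mul_nonneg (hlampos i j t (Ico_subset_Icc_self ht)) (halpha j i t (Ico_subset_Icc_self ht)).1
  have hcont : ∀ i, ContinuousOn (u i) (Icc 0 tf) := fun i t ht ↦
    (hderiv i t ht).continuousAt.continuousWithinAt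
  have hderiv' : ∀ i, ∀ t ∈ Ico (0 : ℝ) tf, HasDerivWithinAt (u i) (u' i t) (Ici t) t :=
    fun i t ht ↦ (hderiv i t (Ico_subset_Icc_self ht)).hasDerivWithinAt
  have hode' : ∀ i, ∀ t ∈ Ico (0 : ℝ) tf,
      u' i t = ∑ j, lam i j t * alpha j i t * (u j t - u i t) := fun i t ht ↦ by
    rw [hode i t (Ico_subset_Icc_self ht)]
    refine sum_congr rfl fun j _ ↦ ?_
    linear_combination lam i j t * u i t * halphasum i j t (Ico_subset_Icc_self ht)
  exact ⟨inf'_le_of_hasDerivWithinAt_eq_sum_mul_sub hc hcont hderiv' hode' ht,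
    le_sup'_of_hasDerivWithinAt_eq_sum_mul_sub hc hcont hderiv' hode' ht⟩

theorem velocity_envelope_bounds (N : ℕ) [NeZero N] (tf : ℝ) (htf : 0 < tf)
    (u u' : Fin N → ℝ → ℝ)
    (lam alpha : Fin N → Fin N → ℝ → ℝ)
    (hlamcont : ∀ i j, ContinuousOn (lam i j) (Icc 0 tf))
    (hlampos : ∀ i j, ∀ t ∈ Icc (0 : ℝ) tf, 0 ≤ lam i j t)
    (halpha : ∀ i j, ∀ t ∈ Icc (0 : ℝ) tf, 0 ≤ alpha i j t ∧ alpha i j t ≤ 1)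
    (halphasum : ∀ i j, ∀ t ∈ Icc (0 : ℝ) tf, alpha i j t + alpha j i t = 1)
    (hderiv : ∀ i, ∀ t ∈ Icc (0 : ℝ) tf, HasDerivAt (u i) (u' i t) t)
    (hode : ∀ i, ∀ t ∈ Icc (0 : ℝ) tf,
      u' i t = ∑ j, lam i j t * ((alpha i j t * u i t + alpha j i t * u j t) - u i t)) :
    ∀ i, ∀ t ∈ Icc (0 : ℝ) tf,
      Finset.univ.inf' Finset.univ_nonempty (fun k => u k 0) ≤ u i t ∧
      u i t ≤ Finset.univ.sup' Finset.univ_nonempty (fun k => u k 0) :=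
  velocity_envelope_bounds_general N tf u u' lam alpha hlampos halpha halphasum hderiv hode
end

section
/- Under the homogeneous multi-species BGK moment dynamics, the species temperatures satisfy dT_i/dt = (1/ε)Σ_j λ_{ij}β_{ji}(T_j − T_i) + (1/(εd))Σ_j λ_{ij} m_i α_{ji}(α_{ji} + β_{ij})|u_i − u_j|², where α_{ij} = ρ_iλ_{ij}/(ρ_iλ_{ij}+ρ_jλ_{ji}) and β_{ij} = n_iλ_{ij}/(n_iλ_{ij}+n_jλ_{ji}). -/
/-!
Write `T_i = (2 / (d n_i)) (E_i - ρ_i |u_i|² / 2)`. The momentum equation gives the kinetic part of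
`dE_i/dt` as `(1/ε) Σ_j ρ_i λ_ij α_ji ⟨u_i, u_j - u_i⟩`, and since `α_ij + α_ji = 1` the mixture velocity
is `u_ij = u_i + α_ji (u_j - u_i)`. Subtracting, the first-order terms in `u_j - u_i` cancel pair by pair,
leaving `ρ_i α_ji² |u_i - u_j|² / 2` from the kinetic energy plus `(d/2) n_i (T_ij - T_i)`; with
`β_ij + β_ji = 1` and `ρ_i = m_i n_i` this is the claimed summand.
-/

open Finset
open scoped RealInnerProductSpace

theorem div_add_div_add_comm_eq_one {K : Type*} [DivisionSemiring K] {a b : K} (h : a + b ≠ 0) :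
    a / (a + b) + b / (b + a) = 1 := by
  rw [add_comm b a, ← add_div, div_self h]

section InnerProductSpace

variable {F : Type*} [NormedAddCommGroup F] [InnerProductSpace ℝ F]

theorem HasDerivAt.half_mul_norm_sq {f : ℝ → F} {f' : F} {x : ℝ} (c : ℝ)
    (hf : HasDerivAt f f' x) :
    HasDerivAt (fun s => 1 / 2 * c * ‖f s‖ ^ 2) ⟪f x, c • f'⟫ x :=
  (hf.norm_sq.const_mul (1 / 2 * c)).congr_deriv (by rw [real_inner_smul_right]; ring)

theorem norm_smul_add_smul_sq_of_add_eq_one {a b : ℝ} (h : a + b = 1) (x y : F) :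
    ‖a • x + b • y‖ ^ 2 = ‖x‖ ^ 2 + 2 * b * ⟪x, y - x⟫ + b ^ 2 * ‖x - y‖ ^ 2 := by
  have hxy : a • x + b • y = x + b • (y - x) := by
    rw [eq_sub_of_add_eq h]; module
  rw [hxy, norm_add_sq_real, real_inner_smul_right, norm_smul, norm_sub_rev y x,
    Real.norm_eq_abs, mul_pow, sq_abs]
  ring

theorem temperature_exchange_eq (x y : F) (l Ti Tj : ℝ) {ρ m n d a a' b b' : ℝ}
    (hρ : ρ = m * n) (hn : n ≠ 0) (hd : d ≠ 0) (ha : a + a' = 1) (hb : b + b' = 1) :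
    2 / (d * n) * (l * (1 / 2 * ρ * ‖a • x + a' • y‖ ^ 2
        + d / 2 * n * (b * Ti + b' * Tj + 1 / d * m * a' * b * ‖x - y‖ ^ 2)
        - (1 / 2 * ρ * ‖x‖ ^ 2 + d / 2 * n * Ti)) - ρ * l * a' * ⟪x, y - x⟫)
      = l * b' * (Tj - Ti) + 1 / d * (l * m * a' * (a' + b) * ‖x - y‖ ^ 2) := by
  rw [norm_smul_add_smul_sq_of_add_eq_one ha, hρ, eq_sub_of_add_eq hb]
  field_simp
  ring

end InnerProductSpace

theorem temperature_ode_general (N d : ℕ) (hd : 1 ≤ d) (ε : ℝ)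
    (m n ρ : Fin N → ℝ) (hm : ∀ i, 0 < m i) (hn : ∀ i, 0 < n i)
    (hρ : ∀ i, ρ i = m i * n i)
    (lam : ℝ → Fin N → Fin N → ℝ) (hlam : ∀ t i j, 0 < lam t i j)
    (alpha beta : ℝ → Fin N → Fin N → ℝ)
    (halpha : ∀ t i j, alpha t i j = ρ i * lam t i j / (ρ i * lam t i j + ρ j * lam t j i))
    (hbeta : ∀ t i j, beta t i j = n i * lam t i j / (n i * lam t i j + n j * lam t j i))
    (u : Fin N → ℝ → EuclideanSpace ℝ (Fin d))
    (u' : Fin N → ℝ → EuclideanSpace ℝ (Fin d))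
    (E T : Fin N → ℝ → ℝ)
    (hu : ∀ i t, HasDerivAt (u i) (u' i t) t)
    (hmom : ∀ i t, ρ i • u' i t =
      (1 / ε) • ∑ j, (ρ i * lam t i j * alpha t j i) • (u j t - u i t))
    (hT : ∀ i t, E i t = (1 / 2) * ρ i * ‖u i t‖ ^ 2 + (d / 2) * n i * T i t)
    (umix : Fin N → Fin N → ℝ → EuclideanSpace ℝ (Fin d))
    (humix : ∀ i j t, umix i j t = alpha t i j • u i t + alpha t j i • u j t)
    (Tmix : Fin N → Fin N → ℝ → ℝ)
    (hTmix : ∀ i j t, Tmix i j t = beta t i j * T i t + beta t j i * T j t +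
      (1 / d) * m i * alpha t j i * beta t i j * ‖u i t - u j t‖ ^ 2)
    (hE : ∀ i t, HasDerivAt (E i)
      ((1 / ε) * ∑ j, lam t i j *
        ((1 / 2) * ρ i * ‖umix i j t‖ ^ 2 + (d / 2) * n i * Tmix i j t - E i t)) t) :
    ∀ i t, HasDerivAt (T i)
      ((1 / ε) * (∑ j, lam t i j * beta t j i * (T j t - T i t)) +
        (1 / (ε * d)) * ∑ j, lam t i j * m i * alpha t j i *
          (alpha t j i + beta t i j) * ‖u i t - u j t‖ ^ 2) t := by
  intro i t
  have hd0 : (d : ℝ) ≠ 0 := Nat.cast_ne_zero.mpr (Nat.one_le_iff_ne_zero.mp hd)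
  have hρpos : ∀ k, 0 < ρ k := fun k => hρ k ▸ mul_pos (hm k) (hn k)
  have hkin := (hu i t).half_mul_norm_sq (ρ i)
  simp only [hmom i t, real_inner_smul_right, inner_sum] at hkin
  have hTE : ∀ s, T i s = 2 / (d * n i) * (E i s - 1 / 2 * ρ i * ‖u i s‖ ^ 2) := fun s => by
    rw [hT i s]
    field_simp [(hn i).ne']
    ring
  refine ((((hE i t).sub hkin).const_mul (2 / (d * n i))).congr_of_eventuallyEq
    (.of_forall hTE)).congr_deriv ?_
  simp only [hT i t, hTmix, humix, mul_sub, mul_sum, ← sum_add_distrib, ← sum_sub_distrib]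
  refine sum_congr rfl fun j _ => ?_
  have hα : alpha t i j + alpha t j i = 1 := by
    rw [halpha, halpha]
    exact div_add_div_add_comm_eq_one
      (add_pos (mul_pos (hρpos i) (hlam t i j)) (mul_pos (hρpos j) (hlam t j i))).ne'
  have hβ : beta t i j + beta t j i = 1 := by
    rw [hbeta, hbeta]
    exact div_add_div_add_comm_eq_one
      (add_pos (mul_pos (hn i) (hlam t i j)) (mul_pos (hn j) (hlam t j i))).ne'
  linear_combination (1 / ε) * temperature_exchange_eq (u i t) (u j t) (lam t i j) (T i t) (T j t)
    (hρ i) (hn i).ne' hd0 hα hβ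

theorem temperature_ode (N d : ℕ) (hN : 1 ≤ N) (hd : 1 ≤ d) (ε : ℝ) (hε : 0 < ε)
    (m n ρ : Fin N → ℝ) (hm : ∀ i, 0 < m i) (hn : ∀ i, 0 < n i)
    (hρ : ∀ i, ρ i = m i * n i)
    (lam : ℝ → Fin N → Fin N → ℝ) (hlam : ∀ t i j, 0 < lam t i j)
    (alpha beta : ℝ → Fin N → Fin N → ℝ)
    (halpha : ∀ t i j, alpha t i j = ρ i * lam t i j / (ρ i * lam t i j + ρ j * lam t j i))
    (hbeta : ∀ t i j, beta t i j = n i * lam t i j / (n i * lam t i j + n j * lam t j i))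
    (u : Fin N → ℝ → EuclideanSpace ℝ (Fin d))
    (u' : Fin N → ℝ → EuclideanSpace ℝ (Fin d))
    (E T : Fin N → ℝ → ℝ)
    (hu : ∀ i t, HasDerivAt (u i) (u' i t) t)
    (hmom : ∀ i t, ρ i • u' i t =
      (1 / ε) • ∑ j, (ρ i * lam t i j * alpha t j i) • (u j t - u i t))
    (hT : ∀ i t, E i t = (1 / 2) * ρ i * ‖u i t‖ ^ 2 + (d / 2) * n i * T i t)
    (umix : Fin N → Fin N → ℝ → EuclideanSpace ℝ (Fin d))
    (humix : ∀ i j t, umix i j t = alpha t i j • u i t + alpha t j i • u j t)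
    (Tmix : Fin N → Fin N → ℝ → ℝ)
    (hTmix : ∀ i j t, Tmix i j t = beta t i j * T i t + beta t j i * T j t +
      (1 / d) * m i * alpha t j i * beta t i j * ‖u i t - u j t‖ ^ 2)
    (hE : ∀ i t, HasDerivAt (E i)
      ((1 / ε) * ∑ j, lam t i j *
        ((1 / 2) * ρ i * ‖umix i j t‖ ^ 2 + (d / 2) * n i * Tmix i j t - E i t)) t) :
    ∀ i t, HasDerivAt (T i)
      ((1 / ε) * (∑ j, lam t i j * beta t j i * (T j t - T i t)) +
        (1 / (ε * d)) * ∑ j, lam t i j * m i * alpha t j i *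
          (alpha t j i + beta t i j) * ‖u i t - u j t‖ ^ 2) t :=
  temperature_ode_general N d hd ε m n ρ hm hn hρ lam hlam alpha beta halpha hbeta u u' E T hu hmom
    hT umix humix Tmix hTmix hE
end
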